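/- Let A be a finite-dimensional Frobenius (symmetric) algebra over a finite field K. Every right ideal of A is checkable (each right ideal is the right annihilator of a principal left ideal) if and only if every left ideal of A is principal. -/

import Mathlib

open Module Submodule

section Helpers

variable {K : Type*} [Field K] {A : Type*} [Ring A] [Algebra K A] [FiniteDimensional K A]

/-- The bilinear form associated to a linear functional. -/
noncomputable def frB (lam : A →ₗ[K] K) : A →ₗ[K] A →ₗ[K] K :=
  (LinearMap.mul K A).compr₂ lam

omit [FiniteDimensional K A] in
@[simp] lemma frB_apply (lam : A →ₗ[K] K) (a b : A) : frB lam a b = lam (a * b) := rfl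

/-- Left orthogonal complement. -/
noncomputable def lperp (lam : A →ₗ[K] K) (S : Submodule K A) : Submodule K A :=
  (S.dualAnnihilator).comap (frB lam)

/-- Right orthogonal complement. -/
noncomputable def rperp (lam : A →ₗ[K] K) (S : Submodule K A) : Submodule K A :=
  (S.dualAnnihilator).comap (frB lam).flip

omit [FiniteDimensional K A] in
lemma mem_lperp {lam : A →ₗ[K] K} {S : Submodule K A} {a : A} :
    a ∈ lperp lam S ↔ ∀ b ∈ S, lam (a * b) = 0 := by
  simp [lperp, Submodule.mem_comap, Submodule.mem_dualAnnihilator]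

omit [FiniteDimensional K A] in
lemma mem_rperp {lam : A →ₗ[K] K} {S : Submodule K A} {b : A} :
    b ∈ rperp lam S ↔ ∀ a ∈ S, lam (a * b) = 0 := by
  simp [rperp, Submodule.mem_comap, Submodule.mem_dualAnnihilator]

lemma finrank_comap_of_injective (f : A →ₗ[K] Dual K A) (hf : Function.Injective f)
    (p : Submodule K (Dual K A)) : finrank K (p.comap f) = finrank K p := by
  have hs : Function.Surjective f :=
    (LinearMap.injective_iff_surjective_of_finrank_eq_finrank
      (Subspace.dual_finrank_eq (K := K) (V := A)).symm).mp hf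
  let e := LinearEquiv.ofBijective f ⟨hf, hs⟩
  have h1 : p.comap f = p.comap (e : A →ₗ[K] Dual K A) := by
    ext x; simp [e, Submodule.mem_comap]; exact Iff.rfl
  rw [h1, Submodule.comap_equiv_eq_map_symm]
  exact LinearEquiv.finrank_map_eq e.symm p

lemma finrank_dualAnn (S : Submodule K A) :
    finrank K S.dualAnnihilator + finrank K S = finrank K A := by
  rw [← LinearEquiv.finrank_eq (Subspace.quotEquivAnnihilator S)]
  exact Submodule.finrank_quotient_add_finrank S

lemma frB_injective {lam : A →ₗ[K] K}
    (hr : ∀ a : A, (∀ c : A, lam (a * c) = 0) → a = 0) :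
    Function.Injective (frB lam) := by
  rw [injective_iff_map_eq_zero]
  intro a ha
  exact hr a fun c => by simpa using congrArg (fun f => f c) ha

lemma frB_flip_injective {lam : A →ₗ[K] K}
    (hl : ∀ b : A, (∀ c : A, lam (c * b) = 0) → b = 0) :
    Function.Injective (frB lam).flip := by
  rw [injective_iff_map_eq_zero]
  intro b hb
  exact hl b fun c => by simpa using congrArg (fun f => f c) hb

lemma finrank_lperp {lam : A →ₗ[K] K}
    (hr : ∀ a : A, (∀ c : A, lam (a * c) = 0) → a = 0) (S : Submodule K A) :
    finrank K (lperp lam S) + finrank K S = finrank K A := by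
  rw [lperp, finrank_comap_of_injective _ (frB_injective hr), finrank_dualAnn]

lemma finrank_rperp {lam : A →ₗ[K] K}
    (hl : ∀ b : A, (∀ c : A, lam (c * b) = 0) → b = 0) (S : Submodule K A) :
    finrank K (rperp lam S) + finrank K S = finrank K A := by
  rw [rperp, finrank_comap_of_injective _ (frB_flip_injective hl), finrank_dualAnn]

lemma rperp_lperp {lam : A →ₗ[K] K}
    (hl : ∀ b : A, (∀ c : A, lam (c * b) = 0) → b = 0)
    (hr : ∀ a : A, (∀ c : A, lam (a * c) = 0) → a = 0) (S : Submodule K A) :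
    rperp lam (lperp lam S) = S := by
  have hle : S ≤ rperp lam (lperp lam S) := by
    intro b hb
    rw [mem_rperp]
    intro a ha
    exact mem_lperp.mp ha b hb
  have h1 := finrank_lperp hr S
  have h2 := finrank_rperp hl (lperp lam S)
  have h3 : finrank K (rperp lam (lperp lam S)) ≤ finrank K S := by omega
  exact (Submodule.eq_of_le_of_finrank_le hle h3).symm

lemma lperp_rperp {lam : A →ₗ[K] K}
    (hl : ∀ b : A, (∀ c : A, lam (c * b) = 0) → b = 0)
    (hr : ∀ a : A, (∀ c : A, lam (a * c) = 0) → a = 0) (S : Submodule K A) :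
    lperp lam (rperp lam S) = S := by
  have hle : S ≤ lperp lam (rperp lam S) := by
    intro a ha
    rw [mem_lperp]
    intro b hb
    exact mem_rperp.mp hb a ha
  have h1 := finrank_rperp hl S
  have h2 := finrank_lperp hr (rperp lam S)
  have h3 : finrank K (lperp lam (rperp lam S)) ≤ finrank K S := by omega
  exact (Submodule.eq_of_le_of_finrank_le hle h3).symm

omit [FiniteDimensional K A] in
/-- A right ideal, viewed as a `K`-subspace. -/
def rIdealK (I : Submodule Aᵐᵒᵖ A) : Submodule K A where
  carrier := I
  add_mem' := fun ha hb => I.add_mem ha hb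
  zero_mem' := I.zero_mem
  smul_mem' := fun k x hx => by
    have h : k • x = MulOpposite.op (algebraMap K A k) • x := by
      rw [op_smul_eq_mul, ← Algebra.commutes, ← Algebra.smul_def]
    rw [h]
    exact I.smul_mem _ hx

omit [FiniteDimensional K A] in
@[simp] lemma mem_rIdealK {I : Submodule Aᵐᵒᵖ A} {x : A} : x ∈ rIdealK (K := K) I ↔ x ∈ I := Iff.rfl

omit [FiniteDimensional K A] in
/-- A left ideal, viewed as a `K`-subspace. -/
def lIdealK (J : Submodule A A) : Submodule K A where
  carrier := J
  add_mem' := fun ha hb => J.add_mem ha hb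
  zero_mem' := J.zero_mem
  smul_mem' := fun k x hx => by
    have h : k • x = (algebraMap K A k) • x := by
      rw [Algebra.smul_def]; rfl
    rw [h]
    exact J.smul_mem _ hx

omit [FiniteDimensional K A] in
@[simp] lemma mem_lIdealK {J : Submodule A A} {x : A} : x ∈ lIdealK (K := K) J ↔ x ∈ J := Iff.rfl

omit [FiniteDimensional K A] in
lemma mem_lperp_rIdeal {lam : A →ₗ[K] K}
    (hr : ∀ a : A, (∀ c : A, lam (a * c) = 0) → a = 0)
    {I : Submodule Aᵐᵒᵖ A} {a : A} :
    a ∈ lperp lam (rIdealK (K := K) I) ↔ ∀ x ∈ I, a * x = 0 := by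
  rw [mem_lperp]
  constructor
  · intro h x hx
    apply hr
    intro c
    rw [mul_assoc]
    apply h
    rw [mem_rIdealK]
    have hxc : x * c = MulOpposite.op c • x := rfl
    rw [hxc]
    exact I.smul_mem _ hx
  · intro h x hx
    rw [h x hx, map_zero]

omit [FiniteDimensional K A] in
lemma mem_rperp_lIdeal {lam : A →ₗ[K] K}
    (hl : ∀ b : A, (∀ c : A, lam (c * b) = 0) → b = 0)
    {J : Submodule A A} {b : A} :
    b ∈ rperp lam (lIdealK (K := K) J) ↔ ∀ x ∈ J, x * b = 0 := by
  rw [mem_rperp]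
  constructor
  · intro h x hx
    apply hl
    intro c
    rw [← mul_assoc]
    exact h _ (J.smul_mem c hx)
  · intro h x hx
    rw [h x hx, map_zero]

/-- Double annihilator, right-ideal version. -/
lemma double_ann_r {lam : A →ₗ[K] K}
    (hl : ∀ b : A, (∀ c : A, lam (c * b) = 0) → b = 0)
    (hr : ∀ a : A, (∀ c : A, lam (a * c) = 0) → a = 0)
    {I : Submodule Aᵐᵒᵖ A} {b : A}
    (hb : ∀ a : A, (∀ x ∈ I, a * x = 0) → a * b = 0) : b ∈ I := by
  have hbm : b ∈ rperp lam (lperp lam (rIdealK (K := K) I)) := by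
    rw [mem_rperp]
    intro a ha
    rw [hb a ((mem_lperp_rIdeal hr).mp ha), map_zero]
  rw [rperp_lperp hl hr] at hbm
  exact hbm

/-- Double annihilator, left-ideal version. -/
lemma double_ann_l {lam : A →ₗ[K] K}
    (hl : ∀ b : A, (∀ c : A, lam (c * b) = 0) → b = 0)
    (hr : ∀ a : A, (∀ c : A, lam (a * c) = 0) → a = 0)
    {J : Submodule A A} {a : A}
    (ha : ∀ b : A, (∀ x ∈ J, x * b = 0) → a * b = 0) : a ∈ J := by
  have ham : a ∈ lperp lam (rperp lam (lIdealK (K := K) J)) := by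
    rw [mem_lperp]
    intro b hb
    rw [ha b ((mem_rperp_lIdeal hl).mp hb), map_zero]
  rw [lperp_rperp hl hr] at ham
  exact ham

/-- The right annihilator of a left ideal, as a right ideal. -/
def rAnn (J : Submodule A A) : Submodule Aᵐᵒᵖ A where
  carrier := {a : A | ∀ x ∈ J, x * a = 0}
  add_mem' := by intro a b ha hb x hx; rw [mul_add, ha x hx, hb x hx, add_zero]
  zero_mem' := fun x _ => mul_zero x
  smul_mem' := by
    intro c a ha x hx
    rw [MulOpposite.smul_eq_mul_unop, ← mul_assoc, ha x hx, zero_mul]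

/-- The left annihilator of a right ideal, as a left ideal. -/
def lAnn (I : Submodule Aᵐᵒᵖ A) : Submodule A A where
  carrier := {a : A | ∀ x ∈ I, a * x = 0}
  add_mem' := by intro a b ha hb x hx; rw [add_mul, ha x hx, hb x hx, add_zero]
  zero_mem' := fun x _ => zero_mul x
  smul_mem' := by
    intro c a ha x hx
    rw [smul_eq_mul, mul_assoc, ha x hx, mul_zero]

/-- The principal left ideal generated by `v`. -/
def pIdeal (v : A) : Submodule A A where
  carrier := {x : A | ∃ b : A, x = b * v}
  add_mem' := by rintro a b ⟨c, rfl⟩ ⟨d, rfl⟩; exact ⟨c + d, by rw [add_mul]⟩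
  zero_mem' := ⟨0, (zero_mul v).symm⟩
  smul_mem' := by rintro c a ⟨d, rfl⟩; exact ⟨c * d, by rw [smul_eq_mul, mul_assoc]⟩

/-- The principal right ideal generated by `v`. -/
def pIdealR (v : A) : Submodule Aᵐᵒᵖ A where
  carrier := {x : A | ∃ b : A, x = v * b}
  add_mem' := by rintro a b ⟨c, rfl⟩ ⟨d, rfl⟩; exact ⟨c + d, by rw [mul_add]⟩
  zero_mem' := ⟨0, (mul_zero v).symm⟩
  smul_mem' := by
    rintro c a ⟨d, rfl⟩
    exact ⟨d * c.unop, by rw [MulOpposite.smul_eq_mul_unop, mul_assoc]⟩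

end Helpers

/-- A finite-dimensional algebra `A` over `K` is Frobenius if there is a `K`-linear
functional whose kernel contains no nonzero left or right ideal. -/
def IsFrobeniusAlgebra (K : Type*) [Field K] (A : Type*) [Ring A] [Algebra K A] : Prop :=
  ∃ lam : A →ₗ[K] K,
    (∀ I : Submodule A A, (I : Set A) ⊆ {a : A | lam a = 0} → I = ⊥) ∧
    (∀ I : Submodule Aᵐᵒᵖ A, (I : Set A) ⊆ {a : A | lam a = 0} → I = ⊥)

/-- in a finite-dimensional Frobenius algebra `A` over a finite field `K`,
every right ideal is checkable iff every left ideal is principal. -/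
theorem stmt14 (K : Type*) [Field K] [Fintype K] (A : Type*) [Ring A] [Algebra K A]
    [FiniteDimensional K A] (hA : IsFrobeniusAlgebra K A) :
    (∀ I : Submodule Aᵐᵒᵖ A, ∃ v : A, (I : Set A) = {a : A | v * a = 0}) ↔
      (∀ I : Submodule A A, ∃ v : A, (I : Set A) = {x : A | ∃ b : A, x = b * v}) := by
  obtain ⟨lam, hL, hR⟩ := hA
  have hr : ∀ a : A, (∀ c : A, lam (a * c) = 0) → a = 0 := by
    intro a h
    have hbot := hR (pIdealR a) (by rintro x ⟨c, rfl⟩; exact h c)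
    have hma : a ∈ pIdealR a := ⟨1, (mul_one a).symm⟩
    rw [hbot] at hma
    exact hma
  have hl : ∀ b : A, (∀ c : A, lam (c * b) = 0) → b = 0 := by
    intro b h
    have hbot := hL (pIdeal b) (by rintro x ⟨c, rfl⟩; exact h c)
    have hmb : b ∈ pIdeal b := ⟨1, (one_mul b).symm⟩
    rw [hbot] at hmb
    exact hmb
  constructor
  · -- every right ideal checkable → every left ideal principal
    intro h J
    obtain ⟨v, hv⟩ := h (rAnn J)
    refine ⟨v, ?_⟩
    ext x
    simp only [SetLike.mem_coe, Set.mem_setOf_eq]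
    constructor
    · intro hx
      have hxp : x ∈ pIdeal v := by
        apply double_ann_l hl hr
        intro b hb
        have hvb : v * b = 0 := hb v ⟨1, (one_mul v).symm⟩
        have hbJ : b ∈ rAnn J := by
          have hmem : b ∈ ({a : A | v * a = 0} : Set A) := hvb
          rw [← hv] at hmem
          exact hmem
        exact hbJ x hx
      exact hxp
    · rintro ⟨b, rfl⟩
      apply double_ann_l hl hr
      intro c hc
      have hcA : c ∈ rAnn J := hc
      have hvc : c ∈ ({a : A | v * a = 0} : Set A) := by
        rw [← hv]; exact hcA
      rw [mul_assoc, hvc, mul_zero]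
  · -- every left ideal principal → every right ideal checkable
    intro h I
    obtain ⟨v, hv⟩ := h (lAnn I)
    have hvJ : v ∈ lAnn I := by
      have hmem : v ∈ ({x : A | ∃ b : A, x = b * v} : Set A) := ⟨1, (one_mul v).symm⟩
      rw [← hv] at hmem
      exact hmem
    refine ⟨v, ?_⟩
    ext a
    simp only [SetLike.mem_coe, Set.mem_setOf_eq]
    constructor
    · intro ha
      exact hvJ a ha
    · intro hva
      apply double_ann_r hl hr
      intro c hc
      have hcJ : c ∈ lAnn I := hc
      have hcv : c ∈ ({x : A | ∃ b : A, x = b * v} : Set A) := by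
        rw [← hv]; exact hcJ
      obtain ⟨b, rfl⟩ := hcv
      rw [mul_assoc, hva, mul_zero]
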